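/- Fix b ∈ ℝ, and let q : ℝ → ℝ be any function such that for every α > 3 one has q(α) ≥ 0 and F_α(q(α)) = Φ(b). Then (q(α) − α)/√α converges to b as α → +∞; i.e., the Gamma quantile h(b;α) = F_α⁻¹(Φ(b)) satisfies h(b;α) = α + b√α + o(√α). -/

import Mathlib

/-!
Substituting `t = α + √α s` turns the Gamma(α,1) density into a multiple of
`exp ((α - 1) (log (1 + x) - x) - x)` with `x = s / √α`. The Taylor expansion
`log (1 + x) - x = -x² / 2 + O(x³)` makes this tend to `exp (-s² / 2)`, and the global bound
`log (1 + x) - x ≤ -x² / (2 (1 + |x|))` dominates it by a multiple of `exp (-|s| / 4)` for all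
`α ≥ 2`. Dominated convergence gives `F_α (α + √α c) → Φ c` for every `c`; since `F_α` is monotone
and `Φ` strictly increasing, `q α` is eventually trapped between `α + √α (b - ε)` and
`α + √α (b + ε)`.
-/

/-- The Gamma(α,1) cumulative distribution function. -/
noncomputable def gammaCDF (α γ : ℝ) : ℝ :=
  (Real.Gamma α)⁻¹ * ∫ t in Set.Ioc (0 : ℝ) γ, t ^ (α - 1) * Real.exp (-t)

/-- The standard normal cumulative distribution function. -/
noncomputable def stdNormalCDF (b : ℝ) : ℝ :=
  (Real.sqrt (2 * Real.pi))⁻¹ * ∫ t in Set.Iic b, Real.exp (-t ^ 2 / 2)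

open MeasureTheory Real Filter Set Topology

namespace Real

lemma log_one_add_sub_self_le_of_nonpos {x : ℝ} (h₁ : -1 < x) (h₀ : x ≤ 0) :
    log (1 + x) - x ≤ -x ^ 2 / 2 := by
  have hsum := hasSum_pow_div_log_of_abs_lt_one (x := -x) (by rw [abs_lt]; constructor <;> linarith)
  have hpartial := sum_le_hasSum (Finset.range 2)
    (fun n _ => div_nonneg (pow_nonneg (neg_nonneg.2 h₀) _) n.cast_add_one_pos.le) hsum
  norm_num [Finset.sum_range_succ] at hpartial
  linarith

lemma log_one_add_sub_self_le_of_nonneg {x : ℝ} (h₀ : 0 ≤ x) :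
    log (1 + x) - x ≤ -x ^ 2 / (2 * (1 + x)) := by
  have hx : (0 : ℝ) < 1 + x := by linarith
  have h := self_le_sinh_iff.2 (log_nonneg (by linarith : (1 : ℝ) ≤ 1 + x))
  rw [sinh_log hx] at h
  have : ((1 + x) - (1 + x)⁻¹) / 2 - x = -x ^ 2 / (2 * (1 + x)) := by field_simp; ring
  linarith

lemma log_one_add_sub_self_le {x : ℝ} (h₁ : -1 < x) :
    log (1 + x) - x ≤ -x ^ 2 / (2 * (1 + |x|)) := by
  rcases le_total x 0 with h₀ | h₀
  · calc log (1 + x) - x ≤ -x ^ 2 / 2 := log_one_add_sub_self_le_of_nonpos h₁ h₀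
      _ ≤ -x ^ 2 / (2 * (1 + |x|)) := by
        rw [neg_div, neg_div, neg_le_neg_iff]
        exact div_le_div_of_nonneg_left (sq_nonneg x) two_pos (by linarith [abs_nonneg x])
  · rw [abs_of_nonneg h₀]; exact log_one_add_sub_self_le_of_nonneg h₀

lemma abs_log_one_add_sub_self_add_sq_div_two_le {x : ℝ} (hx : |x| ≤ 1 / 2) :
    |log (1 + x) - x + x ^ 2 / 2| ≤ 2 * |x| ^ 3 := by
  have h := abs_log_sub_add_sum_range_le (x := -x) (by rw [abs_neg]; linarith) 2
  norm_num [Finset.sum_range_succ, abs_neg] at h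
  calc |log (1 + x) - x + x ^ 2 / 2| = |-x + x ^ 2 / 2 + log (1 + x)| := by ring_nf
    _ ≤ |x| ^ 3 / (1 - |x|) := by simpa [sub_eq_add_neg, add_comm] using h
    _ ≤ 2 * |x| ^ 3 := by
      rw [div_le_iff₀ (by linarith)]; nlinarith [pow_nonneg (abs_nonneg x) 3]

end Real

lemma integrable_exp_neg_mul_abs {b : ℝ} (hb : 0 < b) :
    Integrable fun x : ℝ => exp (-b * |x|) := by
  refine .of_integral_ne_zero ?_
  rw [integral_comp_abs (f := fun x => exp (-b * x)), integral_exp_mul_Ioi (neg_lt_zero.2 hb)]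
  simp [hb.ne']

section AffineSubstitution

variable {E : Type*} [NormedAddCommGroup E] [NormedSpace ℝ E] {a : ℝ}

lemma integral_comp_const_add_mul (g : ℝ → E) (ha : 0 < a) (m : ℝ) :
    ∫ s, g (m + a * s) = a⁻¹ • ∫ t, g t := by
  rw [Measure.integral_comp_mul_left (fun y => g (m + y)) a, integral_add_left_eq_self,
    abs_of_pos (inv_pos.2 ha)]

lemma setIntegral_Iic_comp_const_add_mul (g : ℝ → E) (ha : 0 < a) (m c : ℝ) :
    ∫ s in Iic c, g (m + a * s) = a⁻¹ • ∫ t in Iic (m + a * c), g t := by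
  have hpre : (fun s => m + a * s) ⁻¹' Iic (m + a * c) = Iic c := by
    ext s; simp [mul_le_mul_iff_right₀ ha]
  rw [← integral_indicator measurableSet_Iic, ← integral_indicator measurableSet_Iic,
    ← integral_comp_const_add_mul _ ha m, ← hpre]
  rfl

end AffineSubstitution

noncomputable def gammaKernel (α : ℝ) : ℝ → ℝ :=
  (Ioi 0).indicator fun t => t ^ (α - 1) * exp (-t)

lemma gammaKernel_nonneg (α t : ℝ) : 0 ≤ gammaKernel α t :=
  indicator_nonneg (fun t ht => by have : (0 : ℝ) < t := ht; positivity) t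

lemma integral_gammaKernel {α : ℝ} (hα : 0 < α) : ∫ t, gammaKernel α t = Gamma α := by
  simp_rw [gammaKernel, integral_indicator measurableSet_Ioi, Gamma_eq_integral hα, mul_comm]

lemma integrable_gammaKernel {α : ℝ} (hα : 0 < α) : Integrable (gammaKernel α) := by
  refine (integrable_indicator_iff measurableSet_Ioi).2 ?_
  simpa only [mul_comm] using GammaIntegral_convergent hα

lemma gammaCDF_eq_setIntegral_gammaKernel (α γ : ℝ) :
    gammaCDF α γ = (Gamma α)⁻¹ * ∫ t in Iic γ, gammaKernel α t := by
  rw [gammaCDF, gammaKernel, setIntegral_indicator measurableSet_Ioi, Iic_inter_Ioi]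

lemma monotone_gammaCDF {α : ℝ} (hα : 0 < α) : Monotone (gammaCDF α) := by
  intro γ γ' h
  simp only [gammaCDF_eq_setIntegral_gammaKernel]
  exact mul_le_mul_of_nonneg_left (setIntegral_mono_set (integrable_gammaKernel hα).integrableOn
    (.of_forall (gammaKernel_nonneg α)) (Iic_subset_Iic.2 h).eventuallyLE)
    (inv_nonneg.2 (Gamma_pos_of_pos hα).le)

/-- The density of `(X - α) / √α` for `X ∼ Gamma(α, 1)`, up to a factor depending only on `α`. -/
noncomputable def standardizedGammaKernel (α s : ℝ) : ℝ :=
  gammaKernel α (α + √α * s) / gammaKernel α α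

lemma standardizedGammaKernel_nonneg (α s : ℝ) : 0 ≤ standardizedGammaKernel α s :=
  div_nonneg (gammaKernel_nonneg _ _) (gammaKernel_nonneg _ _)

lemma measurable_standardizedGammaKernel (α : ℝ) : Measurable (standardizedGammaKernel α) := by
  have : Measurable (gammaKernel α) :=
    (by fun_prop : Measurable fun t : ℝ => t ^ (α - 1) * exp (-t)).indicator measurableSet_Ioi
  exact (this.comp (by fun_prop)).div_const _

lemma standardizedGammaKernel_of_le_neg_sqrt {α s : ℝ} (hα : 0 ≤ α) (hs : s ≤ -√α) :
    standardizedGammaKernel α s = 0 := by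
  have : α + √α * s ≤ 0 := by nlinarith [mul_self_sqrt hα, sqrt_nonneg α]
  rw [standardizedGammaKernel, gammaKernel, indicator_of_notMem (by simpa using this), zero_div]

lemma standardizedGammaKernel_eq_exp {α s : ℝ} (hα : 0 < α) (hs : -√α < s) :
    standardizedGammaKernel α s = exp ((α - 1) * log (1 + s / √α) - √α * s) := by
  have hsq : 0 < √α := sqrt_pos.2 hα
  have hx : 0 < 1 + s / √α := by
    have : -1 < s / √α := by rw [lt_div_iff₀ hsq]; linarith
    linarith
  have hval : α + √α * s = α * (1 + s / √α) := by
    field_simp; linear_combination s * mul_self_sqrt hα.le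
  have hpos : α + √α * s ∈ Ioi 0 := by rw [hval]; exact mul_pos hα hx
  rw [standardizedGammaKernel, gammaKernel, indicator_of_mem hpos,
    indicator_of_mem (show α ∈ Ioi 0 from hα), hval, mul_rpow hα.le hx.le, rpow_def_of_pos hx,
    ← hval, mul_assoc, mul_div_mul_left _ _ (rpow_pos_of_pos hα _).ne', ← exp_add, ← exp_sub]
  ring_nf

lemma gammaCDF_add_sqrt_mul_eq_div {α : ℝ} (hα : 0 < α) (c : ℝ) :
    gammaCDF α (α + √α * c) =
      (∫ s in Iic c, standardizedGammaKernel α s) / ∫ s, standardizedGammaKernel α s := by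
  have hsq : 0 < √α := sqrt_pos.2 hα
  have hC : 0 < gammaKernel α α := by
    rw [gammaKernel, indicator_of_mem (show α ∈ Ioi 0 from hα)]; positivity
  simp only [standardizedGammaKernel, integral_div,
    setIntegral_Iic_comp_const_add_mul (gammaKernel α) hsq, integral_comp_const_add_mul _ hsq,
    integral_gammaKernel hα, gammaCDF_eq_setIntegral_gammaKernel, smul_eq_mul]
  field_simp [(Gamma_pos_of_pos hα).ne']

lemma standardizedGammaKernel_le {α : ℝ} (hα : 2 ≤ α) (s : ℝ) :
    standardizedGammaKernel α s ≤ exp (5 / 4) * exp (-(1 / 4) * |s|) := by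
  have hα₀ : 0 < α := by linarith
  rcases le_or_gt s (-√α) with hs | hs
  · rw [standardizedGammaKernel_of_le_neg_sqrt hα₀.le hs]; positivity
  rw [standardizedGammaKernel_eq_exp hα₀ hs, ← exp_add, exp_le_exp]
  have hsq : 1 ≤ √α := one_le_sqrt.2 (by linarith)
  have hαsq : √α * √α = α := mul_self_sqrt hα₀.le
  set x := s / √α with hx
  have hsx : s = √α * x := by rw [hx]; field_simp
  have hx₁ : -1 < x := by rw [hx, lt_div_iff₀ (by linarith)]; linarith
  have habs : |x| ≤ |s| := by
    rw [hsx, abs_mul, abs_of_pos (by linarith : 0 < √α)]; nlinarith [abs_nonneg x]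
  have hψ := log_one_add_sub_self_le hx₁
  have hquad : 0 ≤ x ^ 2 / (2 * (1 + |x|)) := by positivity
  have hhalf : (α - 1) * (log (1 + x) - x) ≤ α / 2 * (-x ^ 2 / (2 * (1 + |x|))) := by
    rw [neg_div] at hψ ⊢; nlinarith
  have hscale : α / 2 * (-x ^ 2 / (2 * (1 + |x|))) = -s ^ 2 / (4 * (1 + |x|)) := by
    rw [hsx, mul_pow, sq_sqrt hα₀.le]; field_simp; ring
  have htail : -s ^ 2 / (4 * (1 + |x|)) ≤ 1 / 4 - |s| / 4 := by
    rw [div_le_iff₀ (by positivity)]; nlinarith [sq_abs s, abs_nonneg s, abs_nonneg x]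
  calc (α - 1) * log (1 + x) - √α * s = (α - 1) * (log (1 + x) - x) - x := by
        rw [hsx, ← mul_assoc, hαsq]; ring
    _ ≤ 5 / 4 + -(1 / 4) * |s| := by linarith

lemma tendsto_mul_log_one_add_div_sqrt_sub (s : ℝ) :
    Tendsto (fun α => α * (log (1 + s / √α) - s / √α)) atTop (𝓝 (-s ^ 2 / 2)) := by
  have hx : Tendsto (fun α => s / √α) atTop (𝓝 0) :=
    tendsto_const_nhds.div_atTop tendsto_sqrt_atTop
  have hsmall : ∀ᶠ α in atTop, |s / √α| ≤ 1 / 2 := by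
    filter_upwards [hx.eventually (Metric.closedBall_mem_nhds 0 (by norm_num : (0 : ℝ) < 1 / 2))]
      with α h using by rwa [dist_zero_right, norm_eq_abs] at h
  have hbound : Tendsto (fun α => 2 * |s| ^ 3 / √α) atTop (𝓝 0) :=
    tendsto_const_nhds.div_atTop tendsto_sqrt_atTop
  rw [tendsto_iff_norm_sub_tendsto_zero]
  refine squeeze_zero' (.of_forall fun _ => norm_nonneg _) ?_ hbound
  filter_upwards [hsmall, eventually_gt_atTop 0] with α hsmall hα
  obtain ⟨r, hr, rfl⟩ : ∃ r, 0 < r ∧ α = r ^ 2 := ⟨√α, sqrt_pos.2 hα, (sq_sqrt hα.le).symm⟩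
  rw [sqrt_sq hr.le] at hsmall ⊢
  calc ‖r ^ 2 * (log (1 + s / r) - s / r) - -s ^ 2 / 2‖
      = r ^ 2 * |log (1 + s / r) - s / r + (s / r) ^ 2 / 2| := by
        rw [norm_eq_abs, ← abs_of_pos hα, ← abs_mul, abs_of_pos hα]
        congr 1; field_simp; ring
    _ ≤ r ^ 2 * (2 * |s / r| ^ 3) :=
        mul_le_mul_of_nonneg_left (abs_log_one_add_sub_self_add_sq_div_two_le hsmall) hα.le
    _ = 2 * |s| ^ 3 / r := by
        rw [abs_div, abs_of_pos hr]; field_simp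

lemma tendsto_standardizedGammaKernel (s : ℝ) :
    Tendsto (fun α => standardizedGammaKernel α s) atTop (𝓝 (exp (-s ^ 2 / 2))) := by
  have hlog : Tendsto (fun α => log (1 + s / √α)) atTop (𝓝 0) := by
    have h := ((tendsto_const_nhds (x := s)).div_atTop tendsto_sqrt_atTop).const_add 1
    rw [add_zero] at h
    simpa using h.log one_ne_zero
  have hexp := (continuous_exp.tendsto _).comp ((tendsto_mul_log_one_add_div_sqrt_sub s).sub hlog)
  rw [sub_zero] at hexp
  refine hexp.congr' ?_
  filter_upwards [eventually_gt_atTop 0, tendsto_sqrt_atTop.eventually_gt_atTop (-s)] with α hα hs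
  rw [Function.comp_apply, standardizedGammaKernel_eq_exp hα (by linarith)]
  obtain ⟨r, hr, rfl⟩ : ∃ r, 0 < r ∧ α = r ^ 2 := ⟨√α, sqrt_pos.2 hα, (sq_sqrt hα.le).symm⟩
  rw [sqrt_sq hr.le]
  congr 1
  field_simp
  ring

lemma tendsto_setIntegral_standardizedGammaKernel (S : Set ℝ) :
    Tendsto (fun α => ∫ s in S, standardizedGammaKernel α s) atTop
      (𝓝 (∫ s in S, exp (-s ^ 2 / 2))) :=
  tendsto_integral_filter_of_dominated_convergence (fun s => exp (5 / 4) * exp (-(1 / 4) * |s|))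
    (.of_forall fun α => (measurable_standardizedGammaKernel α).aestronglyMeasurable)
    ((eventually_ge_atTop 2).mono fun α hα => .of_forall fun s => by
      rw [norm_of_nonneg (standardizedGammaKernel_nonneg α s)]
      exact standardizedGammaKernel_le hα s)
    ((integrable_exp_neg_mul_abs (by norm_num)).const_mul _).integrableOn
    (.of_forall tendsto_standardizedGammaKernel)

lemma integral_exp_neg_sq_div_two : ∫ x : ℝ, exp (-x ^ 2 / 2) = √(2 * π) := by
  have h := integral_gaussian (1 / 2)
  rw [div_div_eq_mul_div, div_one, mul_comm] at h
  simpa [neg_div, div_eq_inv_mul] using h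

lemma tendsto_gammaCDF_add_sqrt_mul (c : ℝ) :
    Tendsto (fun α => gammaCDF α (α + √α * c)) atTop (𝓝 (stdNormalCDF c)) := by
  have hI := tendsto_setIntegral_standardizedGammaKernel (Iic c)
  have hJ := tendsto_setIntegral_standardizedGammaKernel univ
  simp only [Measure.restrict_univ, integral_exp_neg_sq_div_two] at hJ
  rw [stdNormalCDF, inv_mul_eq_div]
  refine (hI.div hJ (by positivity)).congr' ?_
  filter_upwards [eventually_gt_atTop 0] with α hα using (gammaCDF_add_sqrt_mul_eq_div hα c).symm

lemma stdNormalCDF_strictMono : StrictMono stdNormalCDF := by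
  intro a c h
  have hint : Integrable fun t : ℝ => exp (-t ^ 2 / 2) :=
    .of_integral_ne_zero (by rw [integral_exp_neg_sq_div_two]; positivity)
  refine mul_lt_mul_of_pos_left ?_ (by positivity)
  rw [← sub_pos, intervalIntegral.integral_Iic_sub_Iic hint.integrableOn hint.integrableOn]
  exact intervalIntegral.intervalIntegral_pos_of_pos_on hint.intervalIntegrable
    (fun t _ => exp_pos _) h

/-- Fix `b ∈ ℝ`. If `q : ℝ → ℝ` satisfies `q(α) ≥ 0` and `F_α(q(α)) = Φ(b)` for every
`α > 3`, then `(q(α) − α)/√α → b` as `α → ∞`; i.e. the Gamma quantile satisfies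
`h(b;α) = α + b√α + o(√α)`. -/
theorem gamma_quantile_asymptotic (b : ℝ) (q : ℝ → ℝ)
    (hq : ∀ α : ℝ, 3 < α → 0 ≤ q α ∧ gammaCDF α (q α) = stdNormalCDF b) :
    Filter.Tendsto (fun α : ℝ => (q α - α) / Real.sqrt α) Filter.atTop (nhds b) := by
  refine tendsto_order.2 ⟨fun a ha => ?_, fun a ha => ?_⟩
  · filter_upwards [(tendsto_gammaCDF_add_sqrt_mul a).eventually_lt_const
      (stdNormalCDF_strictMono ha), eventually_gt_atTop 3] with α hlt hα
    have hlo := (monotone_gammaCDF (by linarith)).reflect_lt (hlt.trans_eq (hq α hα).2.symm)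
    rw [lt_div_iff₀ (sqrt_pos.2 (by linarith))]
    linarith
  · filter_upwards [(tendsto_gammaCDF_add_sqrt_mul a).eventually_const_lt
      (stdNormalCDF_strictMono ha), eventually_gt_atTop 3] with α hlt hα
    have hhi := (monotone_gammaCDF (by linarith)).reflect_lt ((hq α hα).2.trans_lt hlt)
    rw [div_lt_iff₀ (sqrt_pos.2 (by linarith))]
    linarith
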